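/- arXiv:1607.01346 — 5 statements merged into one kernel-verified Lean document; each statement's English description precedes it below -/
import Mathlib

section
/- Every finite game possesses a 0-coarse correlated equilibrium: if K ≥ 1 and each player i has a nonempty finite action set A_i and a cost function C_i : (Π i, A_i) → ℝ, then there exists a probability distribution ψ on the joint action space Π i, A_i such that for every player i and every action a_i' ∈ A_i, E_{a∼ψ}[C_i(a)] ≤ E_{a∼ψ}[C_i(a_i', a_{-i})]. -/
/-!
By the von Neumann minimax theorem for the bilinear form `w ⬝ᵥ R *ᵥ ψ`, where `R` is the regret
matrix of the game, it suffices to find, for every nonnegative weighting `w` of the unilateral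
deviations, one distribution `ψ` with zero `w`-weighted regret (Hart–Schmeidler). Take `ψ` to be
the product distribution whose `i`-th marginal is proportional to `w ⟨i, ·⟩`: under a product
distribution, redrawing player `i`'s action from its own marginal does not change the joint law,
so each player's weighted regret vanishes.
-/

open Finset Matrix

theorem LinearMap.exists_isSaddlePointOn
    {E F : Type*} [TopologicalSpace E] [AddCommGroup E] [Module ℝ E] [IsTopologicalAddGroup E]
    [ContinuousSMul ℝ E] [T2Space E] [FiniteDimensional ℝ E]
    [TopologicalSpace F] [AddCommGroup F] [Module ℝ F] [IsTopologicalAddGroup F]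
    [ContinuousSMul ℝ F] [T2Space F] [FiniteDimensional ℝ F]
    (B : E →ₗ[ℝ] F →ₗ[ℝ] ℝ) {X : Set E} {Y : Set F}
    (ne_X : X.Nonempty) (cX : Convex ℝ X) (kX : IsCompact X)
    (ne_Y : Y.Nonempty) (cY : Convex ℝ Y) (kY : IsCompact Y) :
    ∃ a ∈ X, ∃ b ∈ Y, IsSaddlePointOn X Y (fun x y ↦ B x y) a b :=
  Sion.exists_isSaddlePointOn ne_X cX kX
    (fun y _ ↦ (B.flip y).continuous_of_finiteDimensional.continuousOn.lowerSemicontinuousOn)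
    (fun y _ ↦ ((B.flip y).convexOn cX).quasiconvexOn) cY ne_Y kY
    (fun x _ ↦ (B x).continuous_of_finiteDimensional.continuousOn.upperSemicontinuousOn)
    (fun x _ ↦ ((B x).concaveOn cY).quasiconcaveOn)

theorem Matrix.exists_mem_stdSimplex_mulVec_nonpos {ι α : Type*} [Fintype ι] [Fintype α]
    [Nonempty α] (M : Matrix ι α ℝ)
    (h : ∀ y ∈ stdSimplex ℝ ι, ∃ x ∈ stdSimplex ℝ α, y ⬝ᵥ M *ᵥ x ≤ 0) :
    ∃ x ∈ stdSimplex ℝ α, M *ᵥ x ≤ 0 := by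
  classical
  cases isEmpty_or_nonempty ι
  · obtain ⟨x, hx⟩ := (isPathConnected_stdSimplex α).nonempty
    exact ⟨x, hx, isEmptyElim⟩
  obtain ⟨x, hx, y, hy, hsaddle⟩ := (toLinearMap₂' ℝ M).flip.exists_isSaddlePointOn
    (isPathConnected_stdSimplex α).nonempty (convex_stdSimplex ℝ α) (isCompact_stdSimplex ℝ α)
    (isPathConnected_stdSimplex ι).nonempty (convex_stdSimplex ℝ ι) (isCompact_stdSimplex ℝ ι)
  obtain ⟨x', hx', hx'y⟩ := h y hy
  refine ⟨x, hx, fun i ↦ ?_⟩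
  have hrow := hsaddle x' hx' _ (single_mem_stdSimplex ℝ i)
  simp only [LinearMap.flip_apply, toLinearMap₂'_apply', single_dotProduct, one_mul] at hrow
  exact hrow.trans hx'y

theorem exists_mem_stdSimplex_eq_sum_smul {𝕜 α : Type*} [Field 𝕜] [LinearOrder 𝕜]
    [IsStrictOrderedRing 𝕜] [Fintype α] [Nonempty α] {w : α → 𝕜} (hw : 0 ≤ w) :
    ∃ q ∈ stdSimplex 𝕜 α, w = (∑ a, w a) • q := by
  classical
  by_cases hsum : ∑ a, w a = 0
  · refine ⟨_, single_mem_stdSimplex 𝕜 (Classical.arbitrary α), ?_⟩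
    rw [hsum, zero_smul]
    exact (Fintype.sum_eq_zero_iff_of_nonneg hw).mp hsum
  · refine ⟨(∑ a, w a)⁻¹ • w, ⟨fun a ↦ ?_, ?_⟩, ?_⟩
    · exact smul_nonneg (inv_nonneg.mpr (sum_nonneg fun a _ ↦ hw a)) (hw a)
    · simp only [Pi.smul_apply, smul_eq_mul, ← mul_sum, inv_mul_cancel₀ hsum]
    · rw [smul_smul, mul_inv_cancel₀ hsum, one_smul]

theorem prod_mem_stdSimplex {𝕜 ι : Type*} [CommSemiring 𝕜] [PartialOrder 𝕜]
    [IsOrderedRing 𝕜] [Fintype ι] [DecidableEq ι] {A : ι → Type*} [∀ i, Fintype (A i)]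
    {q : ∀ i, A i → 𝕜} (hq : ∀ i, q i ∈ stdSimplex 𝕜 (A i)) :
    (fun a : ∀ i, A i ↦ ∏ i, q i (a i)) ∈ stdSimplex 𝕜 (∀ i, A i) :=
  ⟨fun a ↦ prod_nonneg fun i _ ↦ (hq i).1 (a i), by
    rw [← Fintype.prod_sum]
    exact prod_eq_one fun i _ ↦ (hq i).2⟩

section Update

variable {ι : Type*} [Fintype ι] [DecidableEq ι] {A : ι → Type*}

theorem Fintype.sum_sum_update_eq [∀ i, Fintype (A i)] {M : Type*} [AddCommMonoid M]
    (i : ι) (F : (∀ j, A j) → A i → M) :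
    ∑ a, ∑ b, F (Function.update a i b) (a i) = ∑ a, ∑ b, F a b := by
  have hinv : Function.Involutive fun p : (∀ j, A j) × A i ↦ (Function.update p.1 i p.2, p.1 i) :=
    fun p ↦ by simp
  simpa only [← Fintype.sum_prod_type', Function.Involutive.coe_toPerm] using
    Equiv.sum_comp (hinv.toPerm _) fun p : (∀ j, A j) × A i ↦ F p.1 p.2

theorem prod_apply_update_mul_apply {R : Type*} [CommMonoid R]
    (q : ∀ i, A i → R) (a : ∀ i, A i) (i : ι) (b : A i) :
    (∏ j, q j (Function.update a i b j)) * q i (a i) = (∏ j, q j (a j)) * q i b := by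
  have hsplit (c : A i) :
      ∏ j, q j (Function.update a i c j) = q i c * ∏ j ∈ univ \ {i}, q j (a j) := by
    simp_rw [Function.apply_update q]
    exact prod_update_of_mem (mem_univ i) _ _
  rw [hsplit, ← Function.update_eq_self i a, hsplit, Function.update_eq_self]
  ac_rfl

end Update

section Regret

variable {ι : Type*} [Fintype ι] [DecidableEq ι] {A : ι → Type*} [∀ i, Fintype (A i)]

/-- Rows are indexed by the unilateral deviations `⟨i, b⟩`; a distribution `ψ` on joint actions
is a 0-CCE exactly when `regretMatrix C *ᵥ ψ ≤ 0`. -/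
def regretMatrix (C : ι → (∀ i, A i) → ℝ) : Matrix (Σ i, A i) (∀ i, A i) ℝ :=
  of fun d a ↦ C d.1 a - C d.1 (Function.update a d.1 d.2)

theorem regretMatrix_mulVec_apply (C : ι → (∀ i, A i) → ℝ) (ψ : (∀ i, A i) → ℝ) (i : ι)
    (b : A i) : (regretMatrix C *ᵥ ψ) ⟨i, b⟩ =
      ∑ a, ψ a * C i a - ∑ a, ψ a * C i (Function.update a i b) := by
  simp only [mulVec, dotProduct, regretMatrix, of_apply, ← sum_sub_distrib]
  exact sum_congr rfl fun a _ ↦ by ring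

theorem sum_mul_regretMatrix_mulVec_prod_eq_zero (C : ι → (∀ i, A i) → ℝ)
    (q : ∀ i, A i → ℝ) (i : ι) :
    ∑ b, q i b * (regretMatrix C *ᵥ fun a ↦ ∏ j, q j (a j)) ⟨i, b⟩ = 0 := by
  set ψ : (∀ i, A i) → ℝ := fun a ↦ ∏ j, q j (a j)
  have hswap (a : ∀ i, A i) (b : A i) : ψ a * q i b = ψ (Function.update a i b) * q i (a i) :=
    (prod_apply_update_mul_apply q a i b).symm
  have hdeviate : ∑ b, q i b * ∑ a, ψ a * C i (Function.update a i b) =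
      ∑ b, q i b * ∑ a, ψ a * C i a :=
    calc ∑ b, q i b * ∑ a, ψ a * C i (Function.update a i b)
        = ∑ a, ∑ b, ψ (Function.update a i b) * q i (a i) * C i (Function.update a i b) := by
          simp only [mul_sum]
          rw [sum_comm]
          refine sum_congr rfl fun a _ ↦ sum_congr rfl fun b _ ↦ ?_
          rw [← hswap]
          ring
      _ = ∑ a, ∑ b, ψ a * q i b * C i a :=
          Fintype.sum_sum_update_eq i fun a b ↦ ψ a * q i b * C i a
      _ = ∑ b, q i b * ∑ a, ψ a * C i a := by
          simp only [mul_sum]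
          rw [sum_comm]
          exact sum_congr rfl fun b _ ↦ sum_congr rfl fun a _ ↦ by ring
  simp only [regretMatrix_mulVec_apply, mul_sub, sum_sub_distrib, hdeviate, sub_self]

theorem exists_mem_stdSimplex_dotProduct_regretMatrix_mulVec_eq_zero [∀ i, Nonempty (A i)]
    (C : ι → (∀ i, A i) → ℝ) {w : (Σ i, A i) → ℝ} (hw : 0 ≤ w) :
    ∃ ψ ∈ stdSimplex ℝ (∀ i, A i), w ⬝ᵥ regretMatrix C *ᵥ ψ = 0 := by
  choose q hq hwq using fun i ↦
    exists_mem_stdSimplex_eq_sum_smul (w := fun b : A i ↦ w ⟨i, b⟩) fun b ↦ hw _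
  refine ⟨_, prod_mem_stdSimplex hq, ?_⟩
  rw [dotProduct, Fintype.sum_sigma]
  refine Fintype.sum_eq_zero _ fun i ↦ ?_
  set total := ∑ b, w ⟨i, b⟩
  have hwi (b : A i) : w ⟨i, b⟩ = total * q i b := congrFun (hwq i) b
  simp_rw [hwi, mul_assoc, ← mul_sum, sum_mul_regretMatrix_mulVec_prod_eq_zero, mul_zero]

end Regret

theorem finite_game_has_zero_CCE_general
    (K : ℕ)
    (A : Fin K → Type) [∀ i, Fintype (A i)] [∀ i, Nonempty (A i)]
    (C : ∀ _ : Fin K, (∀ i, A i) → ℝ) :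
    ∃ ψ : (∀ i, A i) → ℝ,
      (∀ a, 0 ≤ ψ a) ∧ (∑ a, ψ a = 1) ∧
      (∀ (i : Fin K) (a' : A i),
        (∑ a, ψ a * C i a) ≤ ∑ a, ψ a * C i (Function.update a i a')) := by
  obtain ⟨ψ, hψ, hregret⟩ := (regretMatrix C).exists_mem_stdSimplex_mulVec_nonpos fun w hw ↦
    (exists_mem_stdSimplex_dotProduct_regretMatrix_mulVec_eq_zero C hw.1).imp fun _ h ↦
      ⟨h.1, h.2.le⟩
  refine ⟨ψ, hψ.1, hψ.2, fun i a' ↦ ?_⟩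
  have hdeviation := hregret ⟨i, a'⟩
  rw [regretMatrix_mulVec_apply] at hdeviation
  exact sub_nonpos.mp hdeviation

/-- Every finite game possesses a 0-coarse correlated equilibrium:
there is a probability distribution `ψ` on the joint action space such that no
player can decrease its expected cost by deviating to any pure action. -/
theorem finite_game_has_zero_CCE
    (K : ℕ) (hK : 1 ≤ K)
    (A : Fin K → Type) [∀ i, Fintype (A i)] [∀ i, Nonempty (A i)]
    [∀ i, DecidableEq (A i)]
    (C : ∀ _ : Fin K, (∀ i, A i) → ℝ) :
    ∃ ψ : (∀ i, A i) → ℝ,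
      (∀ a, 0 ≤ ψ a) ∧ (∑ a, ψ a = 1) ∧
      (∀ (i : Fin K) (a' : A i),
        (∑ a, ψ a * C i a) ≤ ∑ a, ψ a * C i (Function.update a i a')) :=
  finite_game_has_zero_CCE_general K A C
end

section
/- Multiplicative weights regret bound: let A be a nonempty finite set of N actions, T ≥ 1, and for each round t ∈ {1,…,T} let m_t : A → [0,1] be a cost vector. Fix η with 0 < η ≤ 1/2. Define weights by w_1(a) = 1 and w_{t+1}(a) = w_t(a)·(1−η)^{m_t(a)}, and probability distributions p_t(a) = w_t(a) / Σ_{b∈A} w_t(b). Then for every action a ∈ A, Σ_{t=1}^{T} Σ_{b∈A} p_t(b) m_t(b) ≤ (1+η) Σ_{t=1}^{T} m_t(a) + (ln N)/η. -/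
/-!
The potential `Φ t = ∑ b, w t b` shrinks by a factor `1 - η ⟨p t, m t⟩ ≤ exp (-η ⟨p t, m t⟩)`
in every round, since `(1 - η) ^ x ≤ 1 - η x` on `[0, 1]`. Hence
`(1 - η) ^ (∑ t, m t a) = w T a ≤ Φ T ≤ N exp (-η · total expected cost)`, and taking logarithms
with `log (1 - η) ≥ -(η + η ^ 2)` for `η ≤ 1/2` gives the bound.
-/

open Finset Real

-- Four terms of the series `-log (1 - η) = ∑ η ^ (n + 1) / (n + 1)` are just enough at `η = 1/2`.
theorem neg_add_sq_le_log_one_sub {η : ℝ} (hη0 : 0 ≤ η) (hη1 : η ≤ 1 / 2) :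
    -(η + η ^ 2) ≤ log (1 - η) := by
  have habs : |η| = η := abs_of_nonneg hη0
  have h := abs_log_sub_add_sum_range_le (x := η) (by rw [habs]; linarith) 4
  simp only [habs, sum_range_succ, sum_range_zero] at h
  have htail : η ^ 5 / (1 - η) ≤ 2 * η ^ 5 := by
    rw [div_le_iff₀ (by linarith)]
    nlinarith [pow_nonneg hη0 5]
  nlinarith [(abs_le.mp h).1, pow_nonneg hη0 2, pow_nonneg hη0 3, pow_nonneg hη0 4,
    pow_nonneg hη0 5]

theorem le_mul_add_log_div_of_rpow_le {η S L N : ℝ} (hη0 : 0 < η) (hη1 : η ≤ 1 / 2)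
    (hS : 0 ≤ S) (hN : 0 < N) (h : (1 - η) ^ S ≤ N * exp (-(η * L))) :
    L ≤ (1 + η) * S + log N / η := by
  have hlog : S * log (1 - η) ≤ log N - η * L := by
    have := log_le_log (rpow_pos_of_pos (by linarith) S) h
    rwa [log_rpow (by linarith), log_mul hN.ne' (exp_pos _).ne', log_exp, ← sub_eq_add_neg]
      at this
  have hηL : η * L ≤ η * ((1 + η) * S + log N / η) := by
    rw [mul_add, mul_div_cancel₀ _ hη0.ne']
    nlinarith [neg_add_sq_le_log_one_sub hη0.le hη1]
  exact le_of_mul_le_mul_left hηL hη0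

theorem sum_mul_rpow_le_sum_mul_exp {A : Type*} [Fintype A] [Nonempty A] {η : ℝ} (hη1 : η ≤ 1)
    {w m : A → ℝ} (hw : ∀ b, 0 < w b) (hm : ∀ b, 0 ≤ m b ∧ m b ≤ 1) :
    ∑ b, w b * (1 - η) ^ m b ≤ (∑ b, w b) * exp (-(η * ∑ b, w b / (∑ c, w c) * m b)) := by
  have hW : 0 < ∑ c, w c := sum_pos (fun b _ ↦ hw b) univ_nonempty
  calc ∑ b, w b * (1 - η) ^ m b
      ≤ ∑ b, w b * (1 - η * m b) := by
        refine sum_le_sum fun b _ ↦ mul_le_mul_of_nonneg_left ?_ (hw b).le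
        have := rpow_one_add_le_one_add_mul_self (s := -η) (by linarith) (hm b).1 (hm b).2
        rwa [← sub_eq_add_neg, mul_neg, mul_comm, ← sub_eq_add_neg] at this
    _ = (∑ b, w b) * (1 - η * ∑ b, w b / (∑ c, w c) * m b) := by
        simp only [mul_sub, mul_one, sum_sub_distrib, mul_sum]
        congr 1
        refine sum_congr rfl fun b _ ↦ ?_
        field_simp
    _ ≤ (∑ b, w b) * exp (-(η * ∑ b, w b / (∑ c, w c) * m b)) := by
        gcongr
        linarith [add_one_le_exp (-(η * ∑ b, w b / (∑ c, w c) * m b))]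

section MultiplicativeWeights

variable {A : Type*} {η : ℝ} {m w : ℕ → A → ℝ}

theorem weight_eq_rpow_sum (hη1 : η < 1) (hw0 : ∀ a, w 0 a = 1)
    (hwrec : ∀ t a, w (t + 1) a = w t a * (1 - η) ^ (m t a)) (t : ℕ) (a : A) :
    w t a = (1 - η) ^ (∑ s ∈ range t, m s a) := by
  induction t with
  | zero => simp [hw0]
  | succ t ih => rw [hwrec, ih, sum_range_succ, rpow_add (by linarith)]

theorem weight_pos (hη1 : η < 1) (hw0 : ∀ a, w 0 a = 1)
    (hwrec : ∀ t a, w (t + 1) a = w t a * (1 - η) ^ (m t a)) (t : ℕ) (a : A) : 0 < w t a := by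
  rw [weight_eq_rpow_sum hη1 hw0 hwrec]
  exact rpow_pos_of_pos (by linarith) _

theorem sum_weight_le_card_mul_exp [Fintype A] [Nonempty A] (hη1 : η < 1)
    (hw0 : ∀ a, w 0 a = 1) (hwrec : ∀ t a, w (t + 1) a = w t a * (1 - η) ^ (m t a))
    {p : ℕ → A → ℝ} (hp : ∀ t a, p t a = w t a / ∑ b, w t b) :
    ∀ T, (∀ t ∈ range T, ∀ a, 0 ≤ m t a ∧ m t a ≤ 1) →
      ∑ b, w T b ≤ Fintype.card A * exp (-(η * ∑ t ∈ range T, ∑ b, p t b * m t b))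
  | 0, _ => by simp [hw0]
  | T + 1, hm => by
    have hmT := hm T (self_mem_range_succ T)
    have ih := sum_weight_le_card_mul_exp hη1 hw0 hwrec hp T
      fun t ht ↦ hm t (range_subset_range.mpr T.le_succ ht)
    simp only [hwrec, hp] at ih ⊢
    calc ∑ b, w T b * (1 - η) ^ m T b
        ≤ (∑ b, w T b) * exp (-(η * ∑ b, w T b / (∑ c, w T c) * m T b)) :=
          sum_mul_rpow_le_sum_mul_exp hη1.le (weight_pos hη1 hw0 hwrec T) hmT
      _ ≤ Fintype.card A * exp (-(η * ∑ t ∈ range T, ∑ b, w t b / (∑ c, w t c) * m t b))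
            * exp (-(η * ∑ b, w T b / (∑ c, w T c) * m T b)) := by gcongr
      _ = _ := by rw [mul_assoc, ← exp_add, sum_range_succ, mul_add, neg_add]

end MultiplicativeWeights

theorem multiplicative_weights_regret_bound_general
    (A : Type) [Fintype A]
    (N : ℕ) (hN : N = Fintype.card A)
    (T : ℕ)
    (m : ℕ → A → ℝ)
    (hm : ∀ t ∈ Finset.range T, ∀ a, 0 ≤ m t a ∧ m t a ≤ 1)
    (η : ℝ) (hη0 : 0 < η) (hη1 : η ≤ 1 / 2)
    (w : ℕ → A → ℝ)
    (hw0 : ∀ a, w 0 a = 1)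
    (hwrec : ∀ t a, w (t + 1) a = w t a * (1 - η) ^ (m t a))
    (p : ℕ → A → ℝ)
    (hp : ∀ t a, p t a = w t a / ∑ b, w t b) :
    ∀ a : A,
      (∑ t ∈ Finset.range T, ∑ b, p t b * m t b) ≤
        (1 + η) * (∑ t ∈ Finset.range T, m t a) + Real.log N / η := by
  intro a
  have : Nonempty A := ⟨a⟩
  have hη : η < 1 := by linarith
  refine le_mul_add_log_div_of_rpow_le hη0 hη1 (sum_nonneg fun t ht ↦ (hm t ht a).1)
    (by rw [hN]; exact_mod_cast Fintype.card_pos) ?_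
  calc (1 - η) ^ (∑ t ∈ range T, m t a) = w T a :=
        (weight_eq_rpow_sum hη hw0 hwrec T a).symm
    _ ≤ ∑ b, w T b :=
        single_le_sum (fun b _ ↦ (weight_pos hη hw0 hwrec T b).le) (mem_univ a)
    _ ≤ N * exp (-(η * ∑ t ∈ range T, ∑ b, p t b * m t b)) := by
        rw [hN]; exact sum_weight_le_card_mul_exp hη hw0 hwrec hp T hm

/-- Multiplicative weights regret bound. Rounds are indexed `t = 0, …, T−1`
(corresponding to rounds `1, …, T`), with `w 0 ≡ 1` the initial weights,
`w (t+1) a = w t a * (1−η)^(m t a)` (real exponent) and `p t` the distribution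
proportional to `w t`. Then the total expected cost is at most
`(1+η) ∑_t m t a + (ln N)/η` for every fixed action `a`. -/
theorem multiplicative_weights_regret_bound
    (A : Type) [Fintype A] [Nonempty A]
    (N : ℕ) (hN : N = Fintype.card A)
    (T : ℕ) (hT : 1 ≤ T)
    (m : ℕ → A → ℝ)
    (hm : ∀ t ∈ Finset.range T, ∀ a, 0 ≤ m t a ∧ m t a ≤ 1)
    (η : ℝ) (hη0 : 0 < η) (hη1 : η ≤ 1 / 2)
    (w : ℕ → A → ℝ)
    (hw0 : ∀ a, w 0 a = 1)
    (hwrec : ∀ t a, w (t + 1) a = w t a * (1 - η) ^ (m t a))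
    (p : ℕ → A → ℝ)
    (hp : ∀ t a, p t a = w t a / ∑ b, w t b) :
    ∀ a : A,
      (∑ t ∈ Finset.range T, ∑ b, p t b * m t b) ≤
        (1 + η) * (∑ t ∈ Finset.range T, m t a) + Real.log N / η :=
  multiplicative_weights_regret_bound_general A N hN T m hm η hη0 hη1 w hw0 hwrec p hp
end

section
/- Multiplicative weights potential decrease: let A be a nonempty finite set, η ∈ (0,1), and m : A → [0,1] a cost vector. Let w : A → ℝ be strictly positive weights, let Φ = Σ_{a∈A} w(a), let p(a) = w(a)/Φ, and let w'(a) = w(a)·(1−η)^{m(a)} with Φ' = Σ_{a∈A} w'(a). Then Φ' ≤ Φ·(1 − η·Σ_{a∈A} p(a) m(a)). -/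
lemma rpow_le_linear {c x : ℝ} (hc : 0 < c) (hc1 : c ≤ 1) (hx0 : 0 ≤ x) (hx1 : x ≤ 1) :
    c ^ x ≤ 1 - x + x * c := by
  have h := convexOn_exp.2 (Set.mem_univ (0:ℝ)) (Set.mem_univ (Real.log c))
    (by linarith : (0:ℝ) ≤ 1 - x) hx0 (by ring)
  simp only [smul_eq_mul, mul_zero, zero_add, Real.exp_zero, Real.exp_log hc] at h
  rw [Real.rpow_def_of_pos hc]
  calc Real.exp (Real.log c * x) = Real.exp ((1-x) * 0 + x * Real.log c) := by ring_nf
    _ ≤ (1-x) * 1 + x * c := by simpa using h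
    _ = 1 - x + x * c := by ring

/-- Multiplicative weights potential decrease: one update step
`w'(a) = w(a)·(1−η)^(m a)` (real exponent) decreases the potential `Φ = ∑ w(a)`
to at most `Φ·(1 − η·∑ p(a) m(a))`, where `p(a) = w(a)/Φ`. -/
theorem multiplicative_weights_potential_decrease
    (A : Type) [Fintype A] [Nonempty A]
    (η : ℝ) (hη0 : 0 < η) (hη1 : η < 1)
    (m : A → ℝ) (hm : ∀ a, 0 ≤ m a ∧ m a ≤ 1)
    (w : A → ℝ) (hw : ∀ a, 0 < w a)
    (Φ : ℝ) (hΦ : Φ = ∑ a, w a)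
    (p : A → ℝ) (hp : ∀ a, p a = w a / Φ)
    (w' : A → ℝ) (hw' : ∀ a, w' a = w a * (1 - η) ^ (m a))
    (Φ' : ℝ) (hΦ' : Φ' = ∑ a, w' a) :
    Φ' ≤ Φ * (1 - η * ∑ a, p a * m a) := by
  have hΦpos : 0 < Φ := by
    rw [hΦ]; exact Finset.sum_pos (fun a _ => hw a) Finset.univ_nonempty
  have key : ∀ a, w' a ≤ w a * (1 - η * m a) := by
    intro a
    rw [hw' a]
    have h := rpow_le_linear (by linarith : (0:ℝ) < 1 - η) (by linarith) (hm a).1 (hm a).2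
    have := (hw a).le
    nlinarith [h, (hw a).le]
  calc Φ' ≤ ∑ a, w a * (1 - η * m a) := by
        rw [hΦ']; exact Finset.sum_le_sum (fun a _ => key a)
    _ = Φ - η * ∑ a, w a * m a := by
        rw [hΦ, Finset.mul_sum]; rw [← Finset.sum_sub_distrib]
        apply Finset.sum_congr rfl; intro a _; ring
    _ = Φ * (1 - η * ∑ a, p a * m a) := by
        have : ∑ a, p a * m a = (∑ a, w a * m a) / Φ := by
          rw [Finset.sum_div]
          exact Finset.sum_congr rfl fun a _ => by rw [hp a]; ring
        rw [this]; field_simp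
end

section
/- Existence and uniqueness of the Nash bargaining solution (Theorem 2): let S ⊆ ℝ^K be a nonempty compact convex set and δ ∈ ℝ^K a disagreement point, and suppose there exists x ∈ S with x_i > δ_i for every i. Then there exists a unique x* in the feasible set F = {x ∈ S : x_i ≥ δ_i for all i} that maximizes the Nash product ∏_{i=1}^{K}(x_i − δ_i) over F; moreover this maximizer satisfies x*_i > δ_i for all i. -/
/-- Existence and uniqueness of the Nash bargaining solution: for a
nonempty compact convex `S ⊆ ℝ^K` containing a point strictly dominating the
disagreement point `δ`, there is a unique maximizer `x*` of the Nash product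
`∏ i (x i − δ i)` over the feasible set `F = {x ∈ S : ∀ i, δ i ≤ x i}`, and it
satisfies `δ i < x* i` for all i. -/
theorem nash_bargaining_solution_exists_unique
    (K : ℕ) (hK : 1 ≤ K)
    (S : Set (Fin K → ℝ)) (hS : S.Nonempty)
    (hScompact : IsCompact S) (hSconvex : Convex ℝ S)
    (δ : Fin K → ℝ)
    (hdom : ∃ x ∈ S, ∀ i, δ i < x i) :
    ∃ xstar : Fin K → ℝ,
      (xstar ∈ S ∧ (∀ i, δ i ≤ xstar i) ∧
        (∀ y ∈ S, (∀ i, δ i ≤ y i) →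
          (∏ i, (y i - δ i)) ≤ ∏ i, (xstar i - δ i)) ∧
        (∀ i, δ i < xstar i)) ∧
      (∀ z : Fin K → ℝ,
        z ∈ S → (∀ i, δ i ≤ z i) →
        (∀ y ∈ S, (∀ i, δ i ≤ y i) →
          (∏ i, (y i - δ i)) ≤ ∏ i, (z i - δ i)) →
        z = xstar) := by
  obtain ⟨x₀, hx₀S, hx₀⟩ := hdom
  have hFclosed : IsClosed {x : Fin K → ℝ | ∀ i, δ i ≤ x i} := by
    have : {x : Fin K → ℝ | ∀ i, δ i ≤ x i} = ⋂ i, {x | δ i ≤ x i} := by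
      ext x; simp [Set.mem_iInter]
    rw [this]
    exact isClosed_iInter fun i => isClosed_le continuous_const (continuous_apply i)
  have hFcompact : IsCompact (S ∩ {x : Fin K → ℝ | ∀ i, δ i ≤ x i}) :=
    hScompact.inter_right hFclosed
  have hFne : (S ∩ {x : Fin K → ℝ | ∀ i, δ i ≤ x i}).Nonempty :=
    ⟨x₀, hx₀S, fun i => (hx₀ i).le⟩
  have hcont : Continuous fun x : Fin K → ℝ => ∏ i, (x i - δ i) :=
    continuous_finset_prod _ fun i _ => (continuous_apply i).sub continuous_const
  obtain ⟨xstar, hxF, hmax⟩ := hFcompact.exists_isMaxOn hFne hcont.continuousOn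
  obtain ⟨hxS, hxge⟩ := hxF
  have hmax' : ∀ y ∈ S, (∀ i, δ i ≤ y i) →
      (∏ i, (y i - δ i)) ≤ ∏ i, (xstar i - δ i) :=
    fun y hyS hyge => hmax ⟨hyS, hyge⟩
  have hMpos : 0 < ∏ i, (xstar i - δ i) :=
    lt_of_lt_of_le (Finset.prod_pos fun i _ => sub_pos.mpr (hx₀ i))
      (hmax' x₀ hx₀S fun i => (hx₀ i).le)
  have hpos : ∀ (z : Fin K → ℝ), (∀ i, δ i ≤ z i) →
      (∏ i, (z i - δ i)) = ∏ i, (xstar i - δ i) → ∀ i, δ i < z i := by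
    intro z hz hprod i
    rcases lt_or_eq_of_le (hz i) with h | h
    · exact h
    · exfalso
      have h0 : (∏ j, (z j - δ j)) = 0 :=
        Finset.prod_eq_zero (Finset.mem_univ i) (by rw [← h]; ring)
      rw [hprod] at h0; linarith
  have hxpos : ∀ i, δ i < xstar i := hpos xstar hxge rfl
  refine ⟨xstar, ⟨hxS, hxge, hmax', hxpos⟩, ?_⟩
  intro z hzS hzge hzmax
  have hzM : (∏ i, (z i - δ i)) = ∏ i, (xstar i - δ i) :=
    le_antisymm (hmax' z hzS hzge) (hzmax xstar hxS hxge)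
  have hzpos : ∀ i, δ i < z i := hpos z hzge hzM
  by_contra hne
  obtain ⟨j, hj⟩ := Function.ne_iff.mp hne
  set m : Fin K → ℝ := fun i => (z i + xstar i) / 2 with hm
  have hmS : m ∈ S := by
    have h2 := hSconvex hzS hxS (by norm_num : (0:ℝ) ≤ 1/2)
      (by norm_num : (0:ℝ) ≤ 1/2) (by norm_num)
    convert h2 using 1
    funext i
    simp only [hm, Pi.add_apply, Pi.smul_apply, smul_eq_mul]
    ring
  have hmge : ∀ i, δ i ≤ m i := by
    intro i
    have h1 := (hzpos i).le; have h2 := (hxpos i).le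
    simp only [hm]; linarith
  have hle := hmax' m hmS hmge
  have hPnonneg : 0 ≤ ∏ i, (m i - δ i) :=
    Finset.prod_nonneg fun i _ => sub_nonneg.mpr (hmge i)
  have key : (∏ i, (xstar i - δ i))^2 < (∏ i, (m i - δ i))^2 := by
    have hM2 : (∏ i, (xstar i - δ i))^2
        = ∏ i, ((z i - δ i) * (xstar i - δ i)) := by
      rw [Finset.prod_mul_distrib, hzM]; ring
    rw [hM2, ← Finset.prod_pow]
    apply Finset.prod_lt_prod
    · intro i _
      exact mul_pos (sub_pos.mpr (hzpos i)) (sub_pos.mpr (hxpos i))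
    · intro i _
      have : m i - δ i = ((z i - δ i) + (xstar i - δ i)) / 2 := by
        simp only [hm]; ring
      rw [this]
      nlinarith [sq_nonneg ((z i - δ i) - (xstar i - δ i))]
    · refine ⟨j, Finset.mem_univ j, ?_⟩
      have : m j - δ j = ((z j - δ j) + (xstar j - δ j)) / 2 := by
        simp only [hm]; ring
      rw [this]
      have hne' : (z j - δ j) - (xstar j - δ j) ≠ 0 := by
        intro h; apply hj; linarith [sub_eq_zero.mp h]
      nlinarith [sq_pos_of_ne_zero hne', sq_nonneg ((z j - δ j) - (xstar j - δ j))]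
  nlinarith [key, hle, hPnonneg, hMpos]
end

section
/- Proportional fairness of the Nash bargaining solution: let S ⊆ ℝ^K be a nonempty compact convex set, δ ∈ ℝ^K, and suppose x* ∈ S satisfies x*_i > δ_i for all i and maximizes ∏_{i=1}^{K}(x_i − δ_i) over {x ∈ S : x_i ≥ δ_i for all i}. Then for every y ∈ S with y_i ≥ δ_i for all i, Σ_{i=1}^{K} (y_i − x*_i)/(x*_i − δ_i) ≤ 0. -/
/-!
The Nash product is maximized at `x*` over the convex set `S ∩ Set.Ici δ`, so its derivative at
`x*` is nonpositive in every feasible direction `y - x*`. Since `x* > δ`, this derivative is the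
Nash product at `x*` (a positive number) times `∑ i, (y i - x* i) / (x* i - δ i)`.
-/

open Finset

theorem IsMaxOn.hasFDerivAt_sub_nonpos {E : Type*} [NormedAddCommGroup E] [NormedSpace ℝ E]
    {f : E → ℝ} {f' : E →L[ℝ] ℝ} {s : Set E} {x y : E} (hs : Convex ℝ s)
    (hmax : IsMaxOn f s x) (hf : HasFDerivAt f f' x) (hx : x ∈ s) (hy : y ∈ s) :
    f' (y - x) ≤ 0 :=
  hmax.localize.hasFDerivWithinAt_nonpos hf.hasFDerivWithinAt
    (sub_mem_posTangentConeAt_of_segment_subset (hs.segment_subset hx hy))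

theorem hasFDerivAt_prod_sub {ι : Type*} [Fintype ι] {δ x : ι → ℝ} (hx : ∀ i, x i ≠ δ i) :
    HasFDerivAt (fun y : ι → ℝ ↦ ∏ i, (y i - δ i))
      ((∏ i, (x i - δ i)) •
        ∑ i, (x i - δ i)⁻¹ • ContinuousLinearMap.proj (R := ℝ) (φ := fun _ : ι ↦ ℝ) i) x := by
  classical
  refine (HasFDerivAt.finsetProd (u := univ) (g := fun i (y : ι → ℝ) ↦ y i - δ i)
    (fun i _ ↦ (hasFDerivAt_apply (𝕜 := ℝ) i x).sub_const (δ i))).congr_fderiv ?_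
  rw [smul_sum]
  refine sum_congr rfl fun i _ ↦ ?_
  rw [smul_smul, ← prod_erase_mul univ _ (mem_univ i), mul_assoc,
    mul_inv_cancel₀ (sub_ne_zero.mpr (hx i)), mul_one]

theorem nash_bargaining_solution_proportionally_fair_general
    (K : ℕ)
    (S : Set (Fin K → ℝ)) (hSconvex : Convex ℝ S)
    (δ : Fin K → ℝ)
    (xstar : Fin K → ℝ) (hxS : xstar ∈ S)
    (hxstrict : ∀ i, δ i < xstar i)
    (hxmax : ∀ y ∈ S, (∀ i, δ i ≤ y i) →
      (∏ i, (y i - δ i)) ≤ ∏ i, (xstar i - δ i)) :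
    ∀ y ∈ S, (∀ i, δ i ≤ y i) →
      (∑ i, (y i - xstar i) / (xstar i - δ i)) ≤ 0 := by
  intro y hyS hyδ
  have hgrad := hasFDerivAt_prod_sub fun i ↦ (hxstrict i).ne'
  have hdir := IsMaxOn.hasFDerivAt_sub_nonpos (hSconvex.inter (convex_Ici δ))
    (fun z hz ↦ hxmax z hz.1 hz.2) hgrad ⟨hxS, fun i ↦ (hxstrict i).le⟩ ⟨hyS, hyδ⟩
  simp only [smul_apply, FunLike.coe_sum, Finset.sum_apply, ContinuousLinearMap.proj_apply,
    Pi.sub_apply, smul_eq_mul] at hdir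
  have hprod : 0 < ∏ i, (xstar i - δ i) := prod_pos fun i _ ↦ sub_pos.mpr (hxstrict i)
  simpa only [div_eq_inv_mul] using nonpos_of_mul_nonpos_right hdir hprod

/-- Proportional fairness of the Nash bargaining solution: if `x* ∈ S`
strictly dominates the disagreement point `δ` and maximizes the Nash product
`∏ i (x i − δ i)` over the feasible set, then for every feasible `y`,
`∑ i (y i − x* i)/(x* i − δ i) ≤ 0`. -/
theorem nash_bargaining_solution_proportionally_fair
    (K : ℕ)
    (S : Set (Fin K → ℝ)) (hS : S.Nonempty)
    (hScompact : IsCompact S) (hSconvex : Convex ℝ S)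
    (δ : Fin K → ℝ)
    (xstar : Fin K → ℝ) (hxS : xstar ∈ S)
    (hxstrict : ∀ i, δ i < xstar i)
    (hxmax : ∀ y ∈ S, (∀ i, δ i ≤ y i) →
      (∏ i, (y i - δ i)) ≤ ∏ i, (xstar i - δ i)) :
    ∀ y ∈ S, (∀ i, δ i ≤ y i) →
      (∑ i, (y i - xstar i) / (xstar i - δ i)) ≤ 0 :=
  nash_bargaining_solution_proportionally_fair_general K S hSconvex δ xstar hxS hxstrict hxmax
end
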